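/- For any real α > -1 and positive integers m, k, the Type III exceptional X_m-Laguerre polynomial admits the integral representation L_{m,m+k}^{III,α}(x) = (m+k)·∫_0^x L_{k-1}^{α+1}(t)·L_m^{-α-1}(-t) dt + (m+1)·binom(k+α, k-1)·binom(m-α-1, m+1) for all real x. -/

import Mathlib

open Finset

/-- Generalized Laguerre polynomial `L_n^α(x) = ∑_{k=0}^n (-1)^k binom(n+α, n-k) x^k / k!`. -/
noncomputable def lag (α : ℝ) (n : ℕ) (x : ℝ) : ℝ :=
  ∑ k ∈ Finset.range (n + 1),
    (-1 : ℝ) ^ k * (∏ j ∈ Finset.range (n - k), (α + (k : ℝ) + 1 + (j : ℝ))) /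
      ((Nat.factorial (n - k) : ℝ) * (Nat.factorial k : ℝ)) * x ^ k

/-- Generalized Laguerre polynomial with integer index, with the convention
`L_n^α := 0` for `n < 0`. -/
noncomputable def lagZ (α : ℝ) (n : ℤ) (x : ℝ) : ℝ :=
  if 0 ≤ n then lag α n.toNat x else 0

/-- The Type III exceptional `X_m`-Laguerre polynomial of degree `m + k` (for `k ≥ 1`):
`L_{m,m+k}^{III,α}(x) = x L_{k-2}^{α+2}(x) L_m^{-α-1}(-x) + (m+1) L_{k-1}^{α+1}(x) L_{m+1}^{-α-2}(-x)`. -/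
noncomputable def LIII (α : ℝ) (m k : ℕ) (x : ℝ) : ℝ :=
  x * lagZ (α + 2) ((k : ℤ) - 2) x * lag (-α - 1) m (-x)
    + ((m : ℝ) + 1) * lag (α + 1) (k - 1) x * lag (-α - 2) (m + 1) (-x)

/-!
Differentiating the defining formula of `L^{III}` and reducing with the three classical identities
`d/dx L_{n+1}^α = -L_n^{α+1}`, `L_{n+1}^α = L_{n+1}^{α+1} - L_n^{α+1}` and
`x L_n^{α+1} = (n+α+1) L_n^α - (n+1) L_{n+1}^α` (each a coefficientwise Pochhammer identity)
gives `(L^{III})' = (m+k) L_{k-1}^{α+1}(x) L_m^{-α-1}(-x)`. The fundamental theorem of calculus and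
`L_n^α(0) = (α+1)_n / n!` then give the representation; the binomial coefficients of the statement
are the same Pochhammer symbols read backwards.
-/

open Polynomial Nat

lemma ascPochhammer_eval_eq_prod_range {R : Type*} [CommSemiring R] (n : ℕ) (r : R) :
    (ascPochhammer R n).eval r = ∏ j ∈ range n, (r + j) := by
  induction n with
  | zero => simp
  | succ n ih => rw [ascPochhammer_succ_eval, ih, prod_range_succ]

lemma ascPochhammer_succ_eval_left {R : Type*} [CommSemiring R] (n : ℕ) (r : R) :
    (ascPochhammer R (n + 1)).eval r = r * (ascPochhammer R n).eval (r + 1) := by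
  simp [ascPochhammer_succ_left, eval_comp]

lemma prod_range_sub_eq_ascPochhammer_eval {R : Type*} [CommRing R] (n : ℕ) (r : R) :
    ∏ j ∈ range n, (r - j) = (ascPochhammer R n).eval (r - n + 1) := by
  rw [← descPochhammer_eval_eq_prod_range, descPochhammer_eval_eq_ascPochhammer]

noncomputable def lagCoeff (α : ℝ) (n k : ℕ) : ℝ :=
  (-1) ^ k * (ascPochhammer ℝ (n - k)).eval (α + k + 1) / ((n - k)! * k !)

lemma lag_eq_sum (α : ℝ) (n : ℕ) (x : ℝ) :
    lag α n x = ∑ k ∈ range (n + 1), lagCoeff α n k * x ^ k := by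
  simp only [lag, lagCoeff, ascPochhammer_eval_eq_prod_range]

lemma lagCoeff_zero (α : ℝ) (n : ℕ) :
    lagCoeff α n 0 = (ascPochhammer ℝ n).eval (α + 1) / n ! := by
  simp [lagCoeff]

lemma lagCoeff_self (α β : ℝ) (n : ℕ) : lagCoeff α n n = lagCoeff β n n := by
  simp [lagCoeff]

lemma lagCoeff_succ_eq_sub (α : ℝ) {n k : ℕ} (h : k ≤ n) :
    lagCoeff α (n + 1) k = lagCoeff (α + 1) (n + 1) k - lagCoeff (α + 1) n k := by
  obtain ⟨t, rfl⟩ := Nat.exists_eq_add_of_le h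
  rw [lagCoeff, lagCoeff, lagCoeff, show k + t + 1 - k = t + 1 by omega, Nat.add_sub_cancel_left,
    ascPochhammer_succ_eval_left, ascPochhammer_succ_eval, factorial_succ,
    show α + k + 1 + 1 = α + 1 + k + 1 by ring]
  push_cast
  field_simp
  ring

lemma lagCoeff_add_one (α : ℝ) {n k : ℕ} (h : k < n) :
    lagCoeff (α + 1) n k
      = (n + α + 1) * lagCoeff α n (k + 1) - (n + 1) * lagCoeff α (n + 1) (k + 1) := by
  obtain ⟨t, rfl⟩ := Nat.exists_eq_add_of_lt h
  rw [lagCoeff, lagCoeff, lagCoeff, show k + t + 1 - k = t + 1 by omega,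
    show k + t + 1 - (k + 1) = t by omega, show k + t + 1 + 1 - (k + 1) = t + 1 by omega,
    show α + 1 + k + 1 = α + ↑(k + 1) + 1 by push_cast; ring, ascPochhammer_succ_eval,
    factorial_succ, factorial_succ]
  push_cast
  field_simp
  ring

lemma succ_mul_lagCoeff_succ (α : ℝ) {n k : ℕ} (h : k ≤ n) :
    (k + 1) * lagCoeff α (n + 1) (k + 1) = -lagCoeff (α + 1) n k := by
  rw [lagCoeff, lagCoeff, show n + 1 - (k + 1) = n - k by omega, factorial_succ,
    show α + ↑(k + 1) + 1 = α + 1 + k + 1 by push_cast; ring]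
  push_cast
  field_simp
  ring

lemma lag_zero (α x : ℝ) : lag α 0 x = 1 := by
  simp [lag]

lemma lag_apply_zero (α : ℝ) (n : ℕ) :
    lag α n 0 = (ascPochhammer ℝ n).eval (α + 1) / n ! := by
  rw [lag_eq_sum, sum_eq_single_of_mem 0 (by simp) fun k _ hk => by simp [hk], lagCoeff_zero]
  simp

lemma continuous_lag (α : ℝ) (n : ℕ) : Continuous (lag α n) := by
  unfold lag
  fun_prop

lemma lag_succ_eq_sub (α : ℝ) (n : ℕ) (x : ℝ) :
    lag α (n + 1) x = lag (α + 1) (n + 1) x - lag (α + 1) n x := by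
  simp only [lag_eq_sum, sum_range_succ _ (n + 1), lagCoeff_self α (α + 1) (n + 1)]
  rw [sum_congr rfl fun k hk => by rw [lagCoeff_succ_eq_sub α (mem_range_succ_iff.mp hk), sub_mul],
    sum_sub_distrib]
  ring

lemma mul_lag_add_one (α : ℝ) (n : ℕ) (x : ℝ) :
    x * lag (α + 1) n x = (n + α + 1) * lag α n x - (n + 1) * lag α (n + 1) x := by
  rw [lag_eq_sum, lag_eq_sum, lag_eq_sum, sum_range_succ _ n, sum_range_succ' _ n,
    sum_range_succ' _ (n + 1), sum_range_succ _ n]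
  have hconst : (n + α + 1) * lagCoeff α n 0 - (n + 1) * lagCoeff α (n + 1) 0 = 0 := by
    rw [lagCoeff_zero, lagCoeff_zero, ascPochhammer_succ_eval, factorial_succ]
    push_cast
    field_simp
    ring
  have hsum : x * ∑ k ∈ range n, lagCoeff (α + 1) n k * x ^ k
      = ∑ k ∈ range n, ((n + α + 1) * (lagCoeff α n (k + 1) * x ^ (k + 1))
          - (n + 1) * (lagCoeff α (n + 1) (k + 1) * x ^ (k + 1))) := by
    rw [mul_sum]
    refine sum_congr rfl fun k hk => ?_
    rw [lagCoeff_add_one α (mem_range.mp hk)]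
    ring
  rw [mul_add, hsum, sum_sub_distrib, ← mul_sum, ← mul_sum]
  linear_combination x ^ (n + 1) * succ_mul_lagCoeff_succ α le_rfl - hconst

lemma hasDerivAt_lag_succ (α : ℝ) (n : ℕ) (x : ℝ) :
    HasDerivAt (lag α (n + 1)) (-lag (α + 1) n x) x := by
  have h : HasDerivAt (fun y => ∑ k ∈ range (n + 1 + 1), lagCoeff α (n + 1) k * y ^ k)
      (∑ k ∈ range (n + 1 + 1), lagCoeff α (n + 1) k * (k * x ^ (k - 1))) x :=
    HasDerivAt.fun_sum fun k _ => (hasDerivAt_pow k x).const_mul _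
  simp only [← lag_eq_sum] at h
  convert h using 1
  rw [lag_eq_sum, ← sum_neg_distrib, sum_range_succ' _ (n + 1)]
  simp only [Nat.cast_zero, zero_mul, mul_zero, add_zero, Nat.add_sub_cancel, Nat.cast_succ]
  refine sum_congr rfl fun k hk => ?_
  linear_combination -x ^ k * succ_mul_lagCoeff_succ α (mem_range_succ_iff.mp hk)

lemma hasDerivAt_lag_succ_comp_neg (α : ℝ) (n : ℕ) (x : ℝ) :
    HasDerivAt (fun y => lag α (n + 1) (-y)) (lag (α + 1) n (-x)) x := by
  simpa [Function.comp_def] using (hasDerivAt_lag_succ α n (-x)).comp x (hasDerivAt_neg x)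

lemma hasDerivAt_id_mul_lag (α : ℝ) (n : ℕ) (x : ℝ) :
    HasDerivAt (fun y => y * lag (α + 1) n y)
      ((n + α + 1) * lag α n x - α * lag (α + 1) n x) x := by
  cases n with
  | zero => simpa [lag_zero] using hasDerivAt_id' x
  | succ n =>
    refine ((hasDerivAt_id' x).mul (hasDerivAt_lag_succ (α + 1) n x)).congr_deriv ?_
    have h := mul_lag_add_one (α + 1) n x
    rw [lag_succ_eq_sub α n x]
    push_cast
    linear_combination -h

lemma LIII_one (α : ℝ) (m : ℕ) :
    LIII α m 1 = fun x => (m + 1) * lag (-α - 2) (m + 1) (-x) := by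
  funext x
  simp [LIII, lagZ, lag_zero]

lemma LIII_add_two (α : ℝ) (m j : ℕ) :
    LIII α m (j + 2) = fun x => x * lag (α + 2) j x * lag (-α - 1) m (-x)
      + (m + 1) * (lag (α + 1) (j + 1) x * lag (-α - 2) (m + 1) (-x)) := by
  funext x
  simp [LIII, lagZ, mul_assoc]

lemma hasDerivAt_LIII (α : ℝ) {m k : ℕ} (hm : 0 < m) (hk : 0 < k) (x : ℝ) :
    HasDerivAt (LIII α m k) ((m + k) * (lag (α + 1) (k - 1) x * lag (-α - 1) m (-x))) x := by
  obtain ⟨m, rfl⟩ : ∃ n, m = n + 1 := ⟨m - 1, by omega⟩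
  obtain _ | _ | j := k
  · omega
  · rw [LIII_one]
    refine ((hasDerivAt_lag_succ_comp_neg (-α - 2) (m + 1) x).const_mul _).congr_deriv ?_
    rw [show -α - 2 + 1 = -α - 1 by ring, lag_zero]
    push_cast
    ring
  · rw [LIII_add_two, show α + 2 = α + 1 + 1 by ring]
    have hA := (hasDerivAt_id_mul_lag (α + 1) j x).fun_mul
      (hasDerivAt_lag_succ_comp_neg (-α - 1) m x)
    have hC := ((hasDerivAt_lag_succ (α + 1) j x).fun_mul
      (hasDerivAt_lag_succ_comp_neg (-α - 2) (m + 1) x)).const_mul ((m + 1 : ℕ) + 1 : ℝ)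
    refine (hA.fun_add hC).congr_deriv ?_
    have hA' := mul_lag_add_one (α + 1) j x
    have hB := mul_lag_add_one (-α - 1) m (-x)
    have hD := mul_lag_add_one (-α - 2) (m + 1) (-x)
    have hF := lag_succ_eq_sub (-α - 2) m (-x)
    simp only [show -α - 2 + 1 = -α - 1 by ring] at hD hF ⊢
    push_cast at hA' hB hD hF ⊢
    linear_combination -lag (α + 1 + 1) j x * (hB + hD + (m - α) * hF)
      - lag (-α - 1) (m + 1) (-x) * hA'

lemma LIII_apply_zero (α : ℝ) (m k : ℕ) :
    LIII α m k 0 = (m + 1) * ((ascPochhammer ℝ (k - 1)).eval (α + 2) / (k - 1)!)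
      * ((ascPochhammer ℝ (m + 1)).eval (-α - 1) / (m + 1)!) := by
  simp only [LIII, lag_apply_zero, neg_zero, zero_mul, zero_add,
    show α + 1 + 1 = α + 2 by ring, show -α - 2 + 1 = -α - 1 by ring]

theorem typeIII_integral_rep_general (α : ℝ) (m k : ℕ) (hm : 0 < m) (hk : 0 < k)
    (x : ℝ) :
    LIII α m k x
      = ((m : ℝ) + (k : ℝ)) * (∫ t in (0 : ℝ)..x, lag (α + 1) (k - 1) t * lag (-α - 1) m (-t))
        + ((m : ℝ) + 1) *
          ((∏ i ∈ Finset.range (k - 1), ((k : ℝ) + α - (i : ℝ))) / (Nat.factorial (k - 1) : ℝ)) *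
          ((∏ i ∈ Finset.range (m + 1), ((m : ℝ) - α - 1 - (i : ℝ))) /
            (Nat.factorial (m + 1) : ℝ)) := by
  have hcont : Continuous fun t => (m + k : ℝ) * (lag (α + 1) (k - 1) t * lag (-α - 1) m (-t)) :=
    ((continuous_lag _ _).mul ((continuous_lag _ _).comp continuous_neg)).const_mul _
  rw [← intervalIntegral.integral_const_mul, intervalIntegral.integral_eq_sub_of_hasDerivAt
      (fun t _ => hasDerivAt_LIII α hm hk t) (hcont.intervalIntegrable 0 x),
    LIII_apply_zero, prod_range_sub_eq_ascPochhammer_eval, prod_range_sub_eq_ascPochhammer_eval,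
    show (k : ℝ) + α - ((k - 1 : ℕ) : ℝ) + 1 = α + 2 by rw [Nat.cast_sub hk]; ring,
    show (m : ℝ) - α - 1 - ((m + 1 : ℕ) : ℝ) + 1 = -α - 1 by push_cast; ring]
  ring

/-- integral representation
`L_{m,m+k}^{III,α}(x) = (m+k) ∫_0^x L_{k-1}^{α+1}(t) L_m^{-α-1}(-t) dt
  + (m+1) binom(k+α, k-1) binom(m-α-1, m+1)`, where the generalized binomial
coefficients are written as the falling-factorial products divided by factorials. -/
theorem typeIII_integral_rep (α : ℝ) (hα : -1 < α) (m k : ℕ) (hm : 0 < m) (hk : 0 < k)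
    (x : ℝ) :
    LIII α m k x
      = ((m : ℝ) + (k : ℝ)) * (∫ t in (0 : ℝ)..x, lag (α + 1) (k - 1) t * lag (-α - 1) m (-t))
        + ((m : ℝ) + 1) *
          ((∏ i ∈ Finset.range (k - 1), ((k : ℝ) + α - (i : ℝ))) / (Nat.factorial (k - 1) : ℝ)) *
          ((∏ i ∈ Finset.range (m + 1), ((m : ℝ) - α - 1 - (i : ℝ))) /
            (Nat.factorial (m + 1) : ℝ)) :=
  typeIII_integral_rep_general α m k hm hk x
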